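/- Let E be a real inner product space and let μ, μ̃, γ, α be real numbers with μ > μ̃ > 0, γ > 0 and α ≥ γ·μ·μ̃/(μ − μ̃). Then for all x, y ∈ E: (α + γμ)·‖x‖² − 2α·⟪x, y⟫ + (α − γμ̃)·‖y‖² ≥ 0. -/

import Mathlib

/-!
Completing the square, `a · Q(x, y) = ‖a • x - b • y‖² + (a c - b²) ‖y‖²`, shows that the form
`Q(x, y) = a ‖x‖² - 2 b ⟪x, y⟫ + c ‖y‖²` is nonnegative as soon as `a > 0` and `b² ≤ a c`.
With `a = α + γμ`, `b = α`, `c = α - γμ̃` the discriminant condition `α² ≤ (α + γμ)(α - γμ̃)`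
reduces, after cancelling `γ > 0`, to `γμμ̃ ≤ α(μ - μ̃)`, which is the hypothesis on `α`.
-/

open scoped RealInnerProductSpace

section QuadraticForm

variable {E : Type*} [NormedAddCommGroup E] [InnerProductSpace ℝ E]

theorem norm_smul_sub_smul_sq (a b : ℝ) (x y : E) :
    ‖a • x - b • y‖ ^ 2 = a ^ 2 * ‖x‖ ^ 2 - 2 * (a * b) * ⟪x, y⟫ + b ^ 2 * ‖y‖ ^ 2 := by
  rw [norm_sub_sq_real, norm_smul, norm_smul, real_inner_smul_left, real_inner_smul_right,
    mul_pow, mul_pow, Real.norm_eq_abs, Real.norm_eq_abs, sq_abs, sq_abs]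
  ring

theorem mul_quadratic_form_eq (a b c : ℝ) (x y : E) :
    a * (a * ‖x‖ ^ 2 - 2 * b * ⟪x, y⟫ + c * ‖y‖ ^ 2) =
      ‖a • x - b • y‖ ^ 2 + (a * c - b ^ 2) * ‖y‖ ^ 2 := by
  rw [norm_smul_sub_smul_sq]
  ring

theorem quadratic_form_nonneg_of_sq_le_mul {a b c : ℝ} (ha : 0 < a) (hdisc : b ^ 2 ≤ a * c)
    (x y : E) : 0 ≤ a * ‖x‖ ^ 2 - 2 * b * ⟪x, y⟫ + c * ‖y‖ ^ 2 := by
  rw [← mul_nonneg_iff_of_pos_left ha, mul_quadratic_form_eq]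
  have := sub_nonneg.2 hdisc
  positivity

end QuadraticForm

theorem sq_le_add_mul_sub {μ μt γ α : ℝ} (hγ : 0 < γ) (hα : γ * μ * μt ≤ α * (μ - μt)) :
    α ^ 2 ≤ (α + γ * μ) * (α - γ * μt) := by
  have hslack : 0 ≤ γ * (α * (μ - μt) - γ * μ * μt) := mul_nonneg hγ.le (sub_nonneg.2 hα)
  linarith

theorem lifted_operator_quadratic_form_nonneg
    {E : Type*} [NormedAddCommGroup E] [InnerProductSpace ℝ E]
    (μ μt γ α : ℝ) (hμt : 0 < μt) (hμ : μt < μ) (hγ : 0 < γ)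
    (hα : γ * μ * μt / (μ - μt) ≤ α) (x y : E) :
    0 ≤ (α + γ * μ) * ‖x‖ ^ 2 - 2 * α * ⟪x, y⟫ + (α - γ * μt) * ‖y‖ ^ 2 := by
  have hgap : 0 < μ - μt := sub_pos.2 hμ
  have hμpos : 0 < μ := hμt.trans hμ
  have hαpos : 0 < α := (div_pos (by positivity) hgap).trans_le hα
  refine quadratic_form_nonneg_of_sq_le_mul (by positivity) ?_ x y
  exact sq_le_add_mul_sub hγ ((div_le_iff₀ hgap).1 hα)
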